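/- Let X be a digraph on a vertex set V with |V| = n and let I ⊆ [n−1]. Then the number of V-listings σ with X Des(σ) = I equals the number of V-listings σ with X^op Des(σ) = I^op, where I^op = {n − i : i ∈ I}. (This yields U_{X^op} = U_X for the Redei-Berge symmetric function.) -/

import Mathlib

/-! Reversal is a bijection of `V`-listings, and it turns an `X`-descent at position `i` into an
`X^op`-descent at position `n - i`; since `i ↦ n - i` is injective on `[n-1]`, it matches the
listings with `X Des = I` exactly with those with `X^op Des = I^op`. -/

/-- The 1-based `X`-descent set of a listing `l = (σ_1, …, σ_n)`:
the set of `i ∈ [n-1]` with `(σ_i, σ_{i+1}) ∈ E`. -/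
def XDes {V : Type*} (E : V → V → Prop) (l : List V) : Set ℕ :=
  {i : ℕ | ∃ (h1 : 1 ≤ i) (h2 : i ≤ l.length - 1),
    E (l.get ⟨i - 1, by omega⟩) (l.get ⟨i, by omega⟩)}

theorem List.Nodup.length_eq_card_of_forall_mem {V : Type*} [Fintype V] {l : List V}
    (hl : l.Nodup) (hmem : ∀ v, v ∈ l) : l.length = Fintype.card V := by
  classical
  simpa using Fintype.card_congr (hl.getEquivOfForallMemList l hmem)

theorem XDes_subset_Icc {V : Type*} (E : V → V → Prop) (l : List V) :
    XDes E l ⊆ Set.Icc 1 (l.length - 1) :=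
  fun _ ⟨h1, h2, _⟩ => ⟨h1, h2⟩

theorem XDes_reverse {V : Type*} (E : V → V → Prop) (l : List V) :
    XDes (fun u v => E v u) l.reverse = (fun i => l.length - i) '' XDes E l := by
  ext i
  simp only [XDes, Set.mem_ofPred_eq, Set.mem_image, List.length_reverse,
    List.get_eq_getElem]
  constructor
  · rintro ⟨h1, h2, hE⟩
    refine ⟨l.length - i, ⟨by omega, by omega, ?_⟩, by omega⟩
    rw [List.getElem_reverse, List.getElem_reverse] at hE
    convert hE using 2 <;> omega
  · rintro ⟨j, ⟨h1, h2, hE⟩, rfl⟩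
    refine ⟨by omega, by omega, ?_⟩
    rw [List.getElem_reverse, List.getElem_reverse]
    convert hE using 2 <;> omega

theorem injOn_sub_Icc (n : ℕ) : Set.InjOn (fun i => n - i) (Set.Icc 1 (n - 1)) := by
  intro a ha b hb hab
  simp only [Set.mem_Icc] at ha hb hab
  omega

theorem XDes_reverse_eq_image_iff {V : Type*} (E : V → V → Prop) (l : List V) {I : Set ℕ}
    (hI : I ⊆ Set.Icc 1 (l.length - 1)) :
    XDes (fun u v => E v u) l.reverse = (fun i => l.length - i) '' I ↔ XDes E l = I := by
  rw [XDes_reverse]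
  exact (injOn_sub_Icc l.length).image_eq_image_iff (XDes_subset_Icc E l) hI

theorem card_descents_opp {V : Type*} [Fintype V]
    (E : V → V → Prop)
    (I : Set ℕ) (hI : I ⊆ Set.Icc 1 (Fintype.card V - 1)) :
    Nat.card {l : List V // l.Nodup ∧ (∀ v, v ∈ l) ∧ XDes E l = I} =
      Nat.card {l : List V // l.Nodup ∧ (∀ v, v ∈ l) ∧
        XDes (fun u v => E v u) l = (fun i => Fintype.card V - i) '' I} := by
  refine Nat.card_congr ((List.reverse_involutive.toPerm _).subtypeEquiv fun l => ?_)
  simp only [Function.Involutive.coe_toPerm, List.nodup_reverse, List.mem_reverse]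
  refine and_congr_right fun hl => and_congr_right fun hmem => ?_
  rw [← hl.length_eq_card_of_forall_mem hmem] at hI ⊢
  exact (XDes_reverse_eq_image_iff E l hI).symm
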